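/- For every integer k ≥ 1, the polynomial f(x) = d^{k+1}x^{2k+2} − d^{k+1}x^{2k+1} + dx − 1 has no real root in the interval (−∞, −1/√d). Consequently, Q_h has no eigenvalue strictly less than −2√d/(d+1). -/

import Mathlib

open Matrix

/-- Vertices of the complete `d`-ary tree of height `h`: words over `{0,…,d-1}`
of length at most `h` (encoded as a level `l ≤ h` together with a word of length `l`). -/
abbrev Vtx (d h : ℕ) : Type := Σ l : Fin (h + 1), Fin l.val → Fin d

/-- The word (from the root) corresponding to a vertex. -/
def toWord {d h : ℕ} (v : Vtx d h) : List (Fin d) := List.ofFn v.2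

/-- The level of a vertex, i.e. its distance from the root. -/
def lvl {d h : ℕ} (v : Vtx d h) : ℕ := v.1.val

/-- Adjacency in the tree: one vertex is obtained from the other by appending one letter. -/
def adj {d h : ℕ} (v w : Vtx d h) : Prop :=
  (∃ a : Fin d, toWord w = toWord v ++ [a]) ∨ ∃ a : Fin d, toWord v = toWord w ++ [a]

-- The transition matrix of the simple random walk on the complete `d`-ary tree of
-- height `h`: probability `1/(d+1)` along each edge, holding probability `1/(d+1)` at the
-- root and `d/(d+1)` at each leaf.
open scoped Classical in
noncomputable def Q (d h : ℕ) : Matrix (Vtx d h) (Vtx d h) ℂ := fun v w =>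
  if adj v w then 1 / (d + 1)
  else if v = w ∧ lvl v = 0 then 1 / (d + 1)
  else if v = w ∧ lvl v = h then (d : ℂ) / (d + 1)
  else 0

/-- `inSub v c w` means that `w` belongs to the complete subtree `T_c^v` rooted at the
child of `v` labelled `c`. -/
def inSub {d h : ℕ} (v : Vtx d h) (c : Fin d) (w : Vtx d h) : Prop :=
  (toWord v ++ [c]) <+: toWord w

/-!
With `u = d x²`, the polynomial equals `(u^(k+1) - 1) + (-d x)(u^k - 1)`, and for
`x < -1/√d` we have `u > 1` and `x < 0`, so both summands are positive.

For the spectrum, conjugate `Q_h` by the diagonal matrix with entries `√d ^ ℓ(v)`. In the row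
of `v`, each of the at most `d` children then has weight `1/(√d(d+1))` and the parent has weight
`√d/(d+1)`, so the off-diagonal row sums are at most `2√d/(d+1)`; the diagonal entries are
nonnegative, and Gershgorin's circle theorem bounds every eigenvalue from below by
`-2√d/(d+1)`.
-/

open Finset Module.End

def treePoly (d : ℝ) (k : ℕ) (x : ℝ) : ℝ :=
  d ^ (k + 1) * x ^ (2 * k + 2) - d ^ (k + 1) * x ^ (2 * k + 1) + d * x - 1

lemma treePoly_eq (d : ℝ) (k : ℕ) (x : ℝ) :
    treePoly d k x = ((d * x ^ 2) ^ (k + 1) - 1) + -(d * x) * ((d * x ^ 2) ^ k - 1) := by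
  unfold treePoly
  ring

lemma one_lt_mul_sq_of_lt_neg_inv_sqrt {d x : ℝ} (hd : 0 < d) (hx : x < -(1 / √d)) :
    1 < d * x ^ 2 := by
  have h : 1 < -x * √d := (div_lt_iff₀ (Real.sqrt_pos.mpr hd)).mp (lt_neg.mp hx)
  calc 1 < (-x * √d) ^ 2 := by nlinarith
    _ = d * x ^ 2 := by rw [mul_pow, Real.sq_sqrt hd.le, neg_sq, mul_comm]

theorem treePoly_pos_of_lt_neg_inv_sqrt {d x : ℝ} (hd : 0 < d) (hx : x < -(1 / √d)) (k : ℕ) :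
    0 < treePoly d k x := by
  have hu := one_lt_mul_sq_of_lt_neg_inv_sqrt hd hx
  have hx0 : x < 0 := hx.trans (by simp [hd])
  have hdx : 0 < -(d * x) := by nlinarith
  rw [treePoly_eq]
  exact add_pos_of_pos_of_nonneg (sub_pos.mpr (one_lt_pow₀ hu k.succ_ne_zero))
    (mul_nonneg hdx.le (sub_nonneg.mpr (one_le_pow₀ hu.le)))

section Gershgorin

variable {n : Type*} [Fintype n] [DecidableEq n]

theorem hasEigenvalue_diagonal_conj {K : Type*} [Field K] {A : Matrix n n K} {μ : K}
    (hμ : HasEigenvalue (toLin' A) μ) (s : n → K) (hs : ∀ i, s i ≠ 0) :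
    HasEigenvalue (toLin' (of fun i j => s i * A i j / s j)) μ := by
  obtain ⟨z, hz⟩ := hμ.exists_hasEigenvector
  have hAz : A *ᵥ z = μ • z := by simpa [toLin'_apply] using hz.apply_eq_smul
  refine hasEigenvalue_of_hasEigenvector (x := fun i => s i * z i) ⟨?_, ?_⟩
  · rw [mem_eigenspace_iff, toLin'_apply]
    funext i
    have := congrFun hAz i
    simp only [mulVec, dotProduct, of_apply, Pi.smul_apply, smul_eq_mul] at this ⊢
    calc ∑ j, s i * A i j / s j * (s j * z j) = s i * ∑ j, A i j * z j := by
          rw [mul_sum]; exact sum_congr rfl fun j _ => by field_simp [hs j]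
      _ = μ * (s i * z i) := by rw [this]; ring
  · intro h0
    exact hz.2 (funext fun i => (mul_eq_zero.mp (congrFun h0 i)).resolve_left (hs i))

theorem neg_le_re_of_hasEigenvalue {A : Matrix n n ℂ} {μ : ℂ}
    (hμ : HasEigenvalue (toLin' A) μ) (s : n → ℝ) (hs : ∀ i, 0 < s i) {R : ℝ}
    (hdiag : ∀ i, 0 ≤ (A i i).re)
    (hrow : ∀ i, ∑ j ∈ univ.erase i, s i * ‖A i j‖ / s j ≤ R) : -R ≤ μ.re := by
  have hs' : ∀ i, (s i : ℂ) ≠ 0 := fun i => Complex.ofReal_ne_zero.mpr (hs i).ne'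
  obtain ⟨i, hi⟩ := eigenvalue_mem_ball (hasEigenvalue_diagonal_conj hμ _ hs')
  have hnorm : ∀ j, ‖(s i : ℂ) * A i j / s j‖ = s i * ‖A i j‖ / s j := fun j => by
    rw [norm_div, norm_mul, Complex.norm_real, Complex.norm_real, Real.norm_of_nonneg (hs i).le,
      Real.norm_of_nonneg (hs j).le]
  have hdiag_eq : (s i : ℂ) * A i i / s i = A i i := by field_simp [hs' i]
  simp only [Metric.mem_closedBall, dist_eq_norm, of_apply, hdiag_eq, hnorm] at hi
  have := (Complex.abs_re_le_norm (μ - A i i)).trans (hi.trans (hrow i))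
  rw [Complex.sub_re, abs_le] at this
  linarith [hdiag i, this.1]

end Gershgorin

section Tree

variable {d h : ℕ}

def IsChild (v w : Vtx d h) : Prop := ∃ a : Fin d, toWord w = toWord v ++ [a]

instance : DecidableRel (IsChild : Vtx d h → Vtx d h → Prop) := fun v w => by
  unfold IsChild; infer_instance

lemma adj_iff (v w : Vtx d h) : adj v w ↔ IsChild v w ∨ IsChild w v := Iff.rfl

lemma length_toWord (v : Vtx d h) : (toWord v).length = lvl v := by
  simp [toWord, lvl]

lemma toWord_injective : Function.Injective (toWord : Vtx d h → List (Fin d)) := by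
  rintro ⟨⟨l, hl⟩, f⟩ ⟨⟨m, hm⟩, g⟩ hfg
  obtain rfl : l = m := by simpa [toWord] using congrArg List.length hfg
  obtain rfl : f = g := List.ofFn_injective hfg
  rfl

lemma IsChild.lvl_eq {v w : Vtx d h} (hvw : IsChild v w) : lvl w = lvl v + 1 := by
  obtain ⟨a, ha⟩ := hvw
  simpa [length_toWord] using congrArg List.length ha

lemma IsChild.toWord_eq_dropLast {v w : Vtx d h} (hvw : IsChild v w) :
    toWord v = (toWord w).dropLast := by
  obtain ⟨a, ha⟩ := hvw
  rw [ha, List.dropLast_concat]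

lemma card_filter_isChild_le (v : Vtx d h) : #(univ.filter (IsChild v)) ≤ d := by
  calc #(univ.filter (IsChild v)) ≤ #(univ.map (Function.Embedding.some (α := Fin d))) := by
        refine card_le_card_of_injOn (fun w => (toWord w).getLast?) ?_ ?_
        · rintro w hw
          obtain ⟨a, ha⟩ := (mem_filter.mp hw).2
          simp [ha]
        · rintro w₁ hw₁ w₂ hw₂ hlast
          obtain ⟨a₁, ha₁⟩ := (mem_filter.mp hw₁).2
          obtain ⟨a₂, ha₂⟩ := (mem_filter.mp hw₂).2
          simp only [ha₁, ha₂, List.getLast?_concat, Option.some.injEq] at hlast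
          exact toWord_injective (by rw [ha₁, ha₂, hlast])
    _ = d := by simp

lemma card_filter_isParent_le_one (v : Vtx d h) : #(univ.filter (IsChild · v)) ≤ 1 :=
  card_le_one.mpr fun _ hw₁ _ hw₂ => toWord_injective <|
    ((mem_filter.mp hw₁).2.toWord_eq_dropLast).trans (mem_filter.mp hw₂).2.toWord_eq_dropLast.symm

lemma Q_apply_of_adj {v w : Vtx d h} (hvw : adj v w) : Q d h v w = 1 / (d + 1) := by
  simp only [Q, if_pos hvw]

lemma Q_apply_of_not_adj {v w : Vtx d h} (hvw : ¬adj v w) (hne : v ≠ w) : Q d h v w = 0 := by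
  simp [Q, hvw, hne]

lemma re_Q_apply_self_nonneg (v : Vtx d h) : 0 ≤ (Q d h v v).re := by
  unfold Q
  split_ifs <;>
    simp only [← Complex.ofReal_natCast, ← Complex.ofReal_one, ← Complex.ofReal_add,
      ← Complex.ofReal_div, Complex.ofReal_re, Complex.zero_re] <;>
    positivity

lemma norm_Q_apply_of_adj {v w : Vtx d h} (hvw : adj v w) : ‖Q d h v w‖ = 1 / (d + 1) := by
  rw [Q_apply_of_adj hvw, norm_div, norm_one]
  norm_cast

lemma weighted_Q_apply_of_isChild (hd : 0 < d) {v w : Vtx d h} (hvw : IsChild v w) :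
    √d ^ lvl v * ‖Q d h v w‖ / √d ^ lvl w = 1 / (√d * (d + 1)) := by
  have hs : √d ≠ 0 := (Real.sqrt_pos.mpr (Nat.cast_pos.mpr hd)).ne'
  rw [norm_Q_apply_of_adj ((adj_iff v w).mpr (Or.inl hvw)), hvw.lvl_eq, pow_succ]
  field_simp

lemma weighted_Q_apply_of_isParent (hd : 0 < d) {v w : Vtx d h} (hwv : IsChild w v) :
    √d ^ lvl v * ‖Q d h v w‖ / √d ^ lvl w = √d / (d + 1) := by
  have hs : √d ≠ 0 := (Real.sqrt_pos.mpr (Nat.cast_pos.mpr hd)).ne'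
  rw [norm_Q_apply_of_adj ((adj_iff v w).mpr (Or.inr hwv)), hwv.lvl_eq, pow_succ]
  field_simp

theorem weighted_row_sum_Q_le (hd : 0 < d) (v : Vtx d h) :
    ∑ w ∈ univ.erase v, √d ^ lvl v * ‖Q d h v w‖ / √d ^ lvl w ≤ 2 * √d / (d + 1) := by
  set f := fun w => √d ^ lvl v * ‖Q d h v w‖ / √d ^ lvl w
  have hdisj : Disjoint (univ.filter (IsChild v)) (univ.filter (IsChild · v)) :=
    disjoint_filter.mpr fun w _ hc hp => by have := hc.lvl_eq; have := hp.lvl_eq; omega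
  calc ∑ w ∈ univ.erase v, f w
      = ∑ w ∈ univ.erase v with IsChild v w ∨ IsChild w v, f w := by
        refine (sum_filter_of_ne fun w hw hfw => ?_).symm
        by_contra hvw
        rw [← adj_iff] at hvw
        exact hfw (by simp [f, Q_apply_of_not_adj hvw (ne_of_mem_erase hw).symm])
    _ ≤ ∑ w with IsChild v w ∨ IsChild w v, f w :=
        sum_le_sum_of_subset_of_nonneg (filter_subset_filter _ (subset_univ _))
          fun _ _ _ => by positivity
    _ = ∑ w with IsChild v w, f w + ∑ w with IsChild w v, f w := by
        rw [filter_or, sum_union hdisj]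
    _ ≤ #(univ.filter (IsChild v)) • (1 / (√d * (d + 1)))
          + #(univ.filter (IsChild · v)) • (√d / (d + 1)) :=
        add_le_add
          (sum_le_card_nsmul _ _ _ fun w hw =>
            (weighted_Q_apply_of_isChild hd (mem_filter.mp hw).2).le)
          (sum_le_card_nsmul _ _ _ fun w hw =>
            (weighted_Q_apply_of_isParent hd (mem_filter.mp hw).2).le)
    _ ≤ d • (1 / (√d * (d + 1))) + 1 • (√d / (d + 1)) := by
        gcongr
        · exact card_filter_isChild_le v
        · exact card_filter_isParent_le_one v
    _ = 2 * √d / (d + 1) := by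
        have hs : 0 < √d := Real.sqrt_pos.mpr (Nat.cast_pos.mpr hd)
        rw [nsmul_eq_mul, one_nsmul]
        field_simp
        rw [Real.sq_sqrt (Nat.cast_nonneg d)]
        ring

end Tree

theorem stmt_16_general (d h : ℕ) (hd : 2 ≤ d) :
    (∀ k : ℕ, 1 ≤ k → ∀ x : ℝ, x < -(1 / Real.sqrt d) →
      (d : ℝ) ^ (k + 1) * x ^ (2 * k + 2) - (d : ℝ) ^ (k + 1) * x ^ (2 * k + 1)
        + d * x - 1 ≠ 0) ∧
    (∀ r : ℝ, Module.End.HasEigenvalue (Matrix.toLin' (Q d h)) ((r : ℂ)) →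
      ¬ r < -(2 * Real.sqrt d / ((d : ℝ) + 1))) := by
  have hd₀ : 0 < d := by omega
  refine ⟨fun k _ x hx => (treePoly_pos_of_lt_neg_inv_sqrt (Nat.cast_pos.mpr hd₀) hx k).ne', ?_⟩
  intro r hr
  have hre := neg_le_re_of_hasEigenvalue hr (fun v => √d ^ lvl v) (fun _ => by positivity)
    re_Q_apply_self_nonneg (weighted_row_sum_Q_le hd₀)
  rw [Complex.ofReal_re] at hre
  exact not_lt.mpr hre

/-- For every k ≥ 1 the polynomial d^{k+1}x^{2k+2} − d^{k+1}x^{2k+1} + dx − 1 has no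
real root in (−∞, −1/√d); consequently Q_h has no (real) eigenvalue strictly less than
−2√d/(d+1). -/
theorem stmt_16 (d h : ℕ) (hd : 2 ≤ d) (hh : 1 ≤ h) :
    (∀ k : ℕ, 1 ≤ k → ∀ x : ℝ, x < -(1 / Real.sqrt d) →
      (d : ℝ) ^ (k + 1) * x ^ (2 * k + 2) - (d : ℝ) ^ (k + 1) * x ^ (2 * k + 1)
        + d * x - 1 ≠ 0) ∧
    (∀ r : ℝ, Module.End.HasEigenvalue (Matrix.toLin' (Q d h)) ((r : ℂ)) →
      ¬ r < -(2 * Real.sqrt d / ((d : ℝ) + 1))) :=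
  stmt_16_general d h hd
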